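/- arXiv:1203.1399 — 8 statements merged into one kernel-verified Lean document; each statement's English description precedes it below -/
import Mathlib

section
/- Let (Ω, 𝓕, P) be a probability space and let X, M : Ω → ℝ be random variables with X > 0 and M > 0 almost surely. Let p < 0 and q = p/(p-1), so that 0 < q < 1. If E[X·M] ≤ 1, then (E[M^q])^{1-p} ≤ E[X^p], where the expectations are taken as values in [0, ∞] (equivalently, (1/p)E[X^p] ≤ (1/p)(E[M^q])^{1-p} since p < 0). -/
/-!
Writing `M^q = (X M)^q (X^p)^(1-q)`, which holds because `p (1 - q) = -q`, Hölder's inequality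
with the exponents `q` and `1 - q` gives `E[M^q] ≤ E[X M]^q E[X^p]^(1-q) ≤ E[X^p]^(1-q)`,
and `(1 - q)⁻¹ = 1 - p`.
-/

open MeasureTheory
open scoped ENNReal

theorem one_sub_div_sub_one {p : ℝ} (hp : p ≠ 1) : 1 - p / (p - 1) = (1 - p)⁻¹ := by
  have : p - 1 ≠ 0 := sub_ne_zero.mpr hp
  have : 1 - p ≠ 0 := sub_ne_zero.mpr hp.symm
  field_simp
  ring

theorem ENNReal.lintegral_rpow_mul_rpow_one_sub_rpow_inv_le {α : Type*} [MeasurableSpace α]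
    {μ : Measure α} {f g : α → ℝ≥0∞} (hf : AEMeasurable f μ) (hg : AEMeasurable g μ) {q : ℝ}
    (hq0 : 0 ≤ q) (hq1 : q < 1) (hf1 : ∫⁻ a, f a ∂μ ≤ 1) :
    (∫⁻ a, f a ^ q * g a ^ (1 - q) ∂μ) ^ (1 - q)⁻¹ ≤ ∫⁻ a, g a ∂μ := by
  have hq1' : 0 < 1 - q := sub_pos.mpr hq1
  calc (∫⁻ a, f a ^ q * g a ^ (1 - q) ∂μ) ^ (1 - q)⁻¹
      ≤ ((∫⁻ a, f a ∂μ) ^ q * (∫⁻ a, g a ∂μ) ^ (1 - q)) ^ (1 - q)⁻¹ := by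
        gcongr
        exact ENNReal.lintegral_mul_norm_pow_le hf hg hq0 hq1'.le (add_sub_cancel q 1)
    _ ≤ (1 * (∫⁻ a, g a ∂μ) ^ (1 - q)) ^ (1 - q)⁻¹ := by
        gcongr
        exact ENNReal.rpow_le_one hf1 hq0
    _ = ∫⁻ a, g a ∂μ := by
        rw [one_mul, ← ENNReal.rpow_mul, mul_inv_cancel₀ hq1'.ne', ENNReal.rpow_one]

theorem duality_bound_neg_p_general {Ω : Type*} [MeasurableSpace Ω] (P : Measure Ω)
    (X M : Ω → ℝ) (hXm : Measurable X) (hMm : Measurable M)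
    (hX : ∀ᵐ ω ∂P, 0 < X ω) (hM : ∀ᵐ ω ∂P, 0 < M ω)
    (p q : ℝ) (hp : p < 0) (hq : q = p / (p - 1))
    (h1 : ∫⁻ ω, ENNReal.ofReal (X ω * M ω) ∂P ≤ 1) :
    (∫⁻ ω, ENNReal.ofReal (M ω ^ q) ∂P) ^ (1 - p)
      ≤ ∫⁻ ω, ENNReal.ofReal (X ω ^ p) ∂P := by
  have hp1 : p ≠ 1 := by linarith
  have hq0 : 0 < q := hq ▸ div_pos_of_neg_of_neg hp (by linarith)
  have hq_conj : 1 - q = (1 - p)⁻¹ := hq ▸ one_sub_div_sub_one hp1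
  have hq1 : q < 1 := sub_pos.mp (hq_conj ▸ inv_pos.mpr (by linarith))
  have hexp : p * (1 - q) = -q := by
    rw [hq_conj, hq, ← div_eq_mul_inv, ← neg_div_neg_eq, neg_sub, neg_div]
  have hfactor : ∀ᵐ ω ∂P, ENNReal.ofReal (M ω ^ q)
      = ENNReal.ofReal (X ω * M ω) ^ q * ENNReal.ofReal (X ω ^ p) ^ (1 - q) := by
    filter_upwards [hX, hM] with ω hXω hMω
    rw [ENNReal.ofReal_rpow_of_pos (mul_pos hXω hMω),
      ENNReal.ofReal_rpow_of_pos (Real.rpow_pos_of_pos hXω p), ← ENNReal.ofReal_mul (by positivity),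
      ← Real.rpow_mul hXω.le, hexp, Real.mul_rpow hXω.le hMω.le, mul_right_comm,
      ← Real.rpow_add hXω, add_neg_cancel, Real.rpow_zero, one_mul]
  rw [lintegral_congr_ae hfactor, ← inv_inv (1 - p), ← hq_conj]
  exact ENNReal.lintegral_rpow_mul_rpow_one_sub_rpow_inv_le
    (hXm.mul hMm).ennreal_ofReal.aemeasurable (hXm.pow_const p).ennreal_ofReal.aemeasurable
    hq0.le hq1 h1

/-- Duality bound (Lemma A.1, case `p < 0`): if `E[X·M] ≤ 1` then
`(E[M^q])^(1-p) ≤ E[X^p]` where `q = p/(p-1) ∈ (0,1)`. -/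
theorem duality_bound_neg_p {Ω : Type*} [MeasurableSpace Ω] (P : Measure Ω)
    [IsProbabilityMeasure P] (X M : Ω → ℝ) (hXm : Measurable X) (hMm : Measurable M)
    (hX : ∀ᵐ ω ∂P, 0 < X ω) (hM : ∀ᵐ ω ∂P, 0 < M ω)
    (p q : ℝ) (hp : p < 0) (hq : q = p / (p - 1))
    (h1 : ∫⁻ ω, ENNReal.ofReal (X ω * M ω) ∂P ≤ 1) :
    (∫⁻ ω, ENNReal.ofReal (M ω ^ q) ∂P) ^ (1 - p)
      ≤ ∫⁻ ω, ENNReal.ofReal (X ω ^ p) ∂P :=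
  duality_bound_neg_p_general P X M hXm hMm hX hM p q hp hq h1
end

section
/- Let (Ω, 𝓕, (𝓕_t)_{t ≥ 0}, P) be a filtered probability space, let E ⊆ ℝ^k, and let Y : [0, ∞) × Ω → E be an adapted process with continuous paths and constant initial value Y_0 = y ∈ E. Let f : E → ℝ be continuous with f > 0 on E, and let g : E → ℝ be continuous with g(x) ≤ K for all x ∈ E and some constant K ∈ ℝ. Suppose there exists a nondecreasing sequence of stopping times (τ_n)_{n ≥ 1} with τ_n → ∞ almost surely such that, for each n, the stopped process t ↦ f(Y_{t ∧ τ_n}) − ∫_0^{t ∧ τ_n} g(Y_s) ds is a martingale with respect to (𝓕_t). Then for every T ≥ 0, E[f(Y_T)] ≤ f(y) + max(K, 0)·T. -/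
open MeasureTheory Filter Set

/-! Stopping at `τ_n`, the martingale property gives `E[M_n(T)] = f(y)`, where
`M_n(T) = f(Y_{T ∧ τ_n}) - ∫_0^{T ∧ τ_n} g(Y_s) ds`. Since `g ≤ K`, the integral is at most
`max(K, 0) T`, so `f(Y_{T ∧ τ_n}) ≤ M_n(T) + max(K, 0) T`, a nonnegative integrable majorant with
expectation `f(y) + max(K, 0) T`. As `τ_n → ∞`, `f(Y_{T ∧ τ_n}) = f(Y_T)` for large `n`, and
Fatou's lemma applied to the majorants gives the bound. -/

theorem ContinuousOn.measurable_comp_of_forall_mem {α β γ : Type*} [MeasurableSpace α]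
    [TopologicalSpace β] [MeasurableSpace β] [OpensMeasurableSpace β]
    [TopologicalSpace γ] [MeasurableSpace γ] [BorelSpace γ]
    {f : β → γ} {s : Set β} (hf : ContinuousOn f s) {Z : α → β} (hZ : Measurable Z)
    (hZs : ∀ a, Z a ∈ s) : Measurable fun a => f (Z a) :=
  (continuousOn_iff_continuous_domRestrict.mp hf).measurable.comp (hZ.subtype_mk (h := hZs))

theorem intervalIntegral_le_max_zero_mul {φ : ℝ → ℝ} {K b T : ℝ}
    (hφ : IntervalIntegrable φ volume 0 b) (hb : b ∈ Icc 0 T) (hφK : ∀ s ∈ Icc 0 b, φ s ≤ K) :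
    ∫ s in (0 : ℝ)..b, φ s ≤ max K 0 * T :=
  calc ∫ s in (0 : ℝ)..b, φ s ≤ ∫ _ in (0 : ℝ)..b, K :=
        intervalIntegral.integral_mono_on hb.1 hφ intervalIntegrable_const hφK
    _ = b * K := by simp
    _ ≤ b * max K 0 := mul_le_mul_of_nonneg_left (le_max_left K 0) hb.1
    _ ≤ T * max K 0 := mul_le_mul_of_nonneg_right hb.2 (le_max_right K 0)
    _ = max K 0 * T := mul_comm _ _

theorem integral_le_of_ae_eventually_le {α : Type*} [MeasurableSpace α] {μ : Measure α}
    {X : α → ℝ} {h : ℕ → α → ℝ} {c : ℝ} (hX : AEStronglyMeasurable X μ) (hX0 : 0 ≤ᵐ[μ] X)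
    (hh : ∀ n, Integrable (h n) μ) (hh0 : ∀ n, 0 ≤ᵐ[μ] h n) (hc : ∀ n, ∫ a, h n a ∂μ ≤ c)
    (hXh : ∀ᵐ a ∂μ, ∀ᶠ n in atTop, X a ≤ h n a) :
    ∫ a, X a ∂μ ≤ c := by
  have hc0 : 0 ≤ c := (integral_nonneg_of_ae (hh0 0)).trans (hc 0)
  have hlintegral : ∫⁻ a, ENNReal.ofReal (X a) ∂μ ≤ ENNReal.ofReal c :=
    calc ∫⁻ a, ENNReal.ofReal (X a) ∂μ
        ≤ ∫⁻ a, liminf (fun n => ENNReal.ofReal (h n a)) atTop ∂μ := by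
          refine lintegral_mono_ae ?_
          filter_upwards [hXh] with a ha
          exact le_liminf_of_le (by isBoundedDefault)
            (ha.mono fun n hn => ENNReal.ofReal_le_ofReal hn)
      _ ≤ liminf (fun n => ∫⁻ a, ENNReal.ofReal (h n a) ∂μ) atTop :=
          lintegral_liminf_le' fun n => (hh n).aemeasurable.ennreal_ofReal
      _ = liminf (fun n => ENNReal.ofReal (∫ a, h n a ∂μ)) atTop := by
          simp_rw [ofReal_integral_eq_lintegral_ofReal (hh _) (hh0 _)]
      _ ≤ ENNReal.ofReal c :=
          liminf_le_of_le (by isBoundedDefault) fun b hb =>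
            let ⟨n, hn⟩ := hb.exists
            hn.trans (ENNReal.ofReal_le_ofReal (hc n))
  rw [integral_eq_lintegral_of_nonneg_ae hX0 hX]
  exact ENNReal.toReal_le_of_le_ofReal hc0 hlintegral

theorem generator_upper_bound_general {Ω : Type*} {m : MeasurableSpace Ω} {P : Measure Ω}
    [IsProbabilityMeasure P] (ℱ : Filtration ℝ m) {k : ℕ} (E : Set (Fin k → ℝ))
    (Y : ℝ → Ω → Fin k → ℝ) (hYE : ∀ t ω, Y t ω ∈ E)
    (hYadapted : Adapted ℱ Y)
    (hYcont : ∀ ω, Continuous fun t => Y t ω)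
    (y : Fin k → ℝ) (hY0 : ∀ ω, Y 0 ω = y)
    (f g : (Fin k → ℝ) → ℝ)
    (hf : ContinuousOn f E) (hfpos : ∀ x ∈ E, 0 < f x)
    (hg : ContinuousOn g E) (K : ℝ) (hgK : ∀ x ∈ E, g x ≤ K)
    (τ : ℕ → Ω → ℝ)
    (hτ0 : ∀ n ω, 0 ≤ τ n ω)
    (hτtendsto : ∀ᵐ ω ∂P, Tendsto (fun n => τ n ω) atTop atTop)
    (hmart : ∀ n, Martingale
      (fun t ω => f (Y (min t (τ n ω)) ω) - ∫ s in (0:ℝ)..(min t (τ n ω)), g (Y s ω)) ℱ P)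
    (T : ℝ) (hT : 0 ≤ T) :
    ∫ ω, f (Y T ω) ∂P ≤ f y + max K 0 * T := by
  set M : ℕ → Ω → ℝ := fun n ω => f (Y (min T (τ n ω)) ω)
    - ∫ s in (0:ℝ)..(min T (τ n ω)), g (Y s ω)
  have hM_int (n : ℕ) : Integrable (M n) P := (hmart n).integrable T
  have hM_mean (n : ℕ) : ∫ ω, M n ω ∂P = f y := by
    have h := (hmart n).setIntegral_eq hT MeasurableSet.univ
    simp only [Measure.restrict_univ, min_eq_left (hτ0 n _), hY0,
      intervalIntegral.integral_same, sub_zero] at h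
    simp [M, ← h]
  have hfY_le (n : ℕ) (ω : Ω) : f (Y (min T (τ n ω)) ω) ≤ M n ω + max K 0 * T := by
    have h := intervalIntegral_le_max_zero_mul
      ((hg.comp_continuous (hYcont ω) (hYE · ω)).intervalIntegrable 0 _)
      ⟨le_min hT (hτ0 n ω), min_le_left T _⟩ fun s _ => hgK _ (hYE s ω)
    simp only [M, Function.comp_def] at h ⊢
    linarith
  have hfY_meas : Measurable fun ω => f (Y T ω) :=
    hf.measurable_comp_of_forall_mem ((hYadapted T).mono (ℱ.le T) le_rfl) (hYE T)
  have hmajorant_mean (n : ℕ) : ∫ ω, (M n ω + max K 0 * T) ∂P = f y + max K 0 * T := by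
    rw [integral_add (hM_int n) (integrable_const _), hM_mean, integral_const]
    simp
  have hmajorant_eventually : ∀ᵐ ω ∂P, ∀ᶠ n in atTop, f (Y T ω) ≤ M n ω + max K 0 * T := by
    filter_upwards [hτtendsto] with ω hω
    filter_upwards [hω.eventually_ge_atTop T] with n hn
    simpa [min_eq_left hn] using hfY_le n ω
  exact integral_le_of_ae_eventually_le hfY_meas.aestronglyMeasurable
    (ae_of_all _ fun ω => (hfpos _ (hYE T ω)).le)
    (fun n => (hM_int n).add (integrable_const _))
    (fun n => ae_of_all _ fun ω => (hfpos _ (hYE _ ω)).le.trans (hfY_le n ω))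
    (fun n => (hmajorant_mean n).le) hmajorant_eventually

/-- Lemma B.2 (abstract form): if `f(Y_t) - ∫_0^t g(Y_s) ds` is a local martingale with
reducing sequence `τ_n`, `f > 0` is continuous on `E`, `g ≤ K` on `E`, `Y` is an adapted
`E`-valued process with continuous paths and `Y_0 = y`, then
`E[f(Y_T)] ≤ f(y) + max(K,0)·T` for every `T ≥ 0`. -/
theorem generator_upper_bound {Ω : Type*} {m : MeasurableSpace Ω} {P : Measure Ω}
    [IsProbabilityMeasure P] (ℱ : Filtration ℝ m) {k : ℕ} (E : Set (Fin k → ℝ))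
    (Y : ℝ → Ω → Fin k → ℝ) (hYE : ∀ t ω, Y t ω ∈ E)
    (hYadapted : Adapted ℱ Y)
    (hYcont : ∀ ω, Continuous fun t => Y t ω)
    (y : Fin k → ℝ) (hy : y ∈ E) (hY0 : ∀ ω, Y 0 ω = y)
    (f g : (Fin k → ℝ) → ℝ)
    (hf : ContinuousOn f E) (hfpos : ∀ x ∈ E, 0 < f x)
    (hg : ContinuousOn g E) (K : ℝ) (hgK : ∀ x ∈ E, g x ≤ K)
    (τ : ℕ → Ω → ℝ) (hτ : ∀ n, IsStoppingTime ℱ (fun ω => (τ n ω : WithTop ℝ)))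
    (hτ0 : ∀ n ω, 0 ≤ τ n ω)
    (hτmono : ∀ ω, Monotone fun n => τ n ω)
    (hτtendsto : ∀ᵐ ω ∂P, Tendsto (fun n => τ n ω) atTop atTop)
    (hmart : ∀ n, Martingale
      (fun t ω => f (Y (min t (τ n ω)) ω) - ∫ s in (0:ℝ)..(min t (τ n ω)), g (Y s ω)) ℱ P)
    (T : ℝ) (hT : 0 ≤ T) :
    ∫ ω, f (Y T ω) ∂P ≤ f y + max K 0 * T :=
  generator_upper_bound_general ℱ E Y hYE hYadapted hYcont y hY0 f g hf hfpos hg K hgK τ hτ0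
    hτtendsto hmart T hT
end

section
/- Let n, k ≥ 1, p < 1 with p ≠ 0, and q = p/(p−1). Let r₀ ∈ ℝ, r₁ ∈ ℝ^k, μ₀ ∈ ℝ^n, μ₁ ∈ ℝ^{n×k}, b ∈ ℝ^{k×k}, Υ ∈ ℝ^{n×k}, let Σ ∈ ℝ^{n×n} be symmetric positive definite and A ∈ ℝ^{k×k} symmetric. Suppose the symmetric matrix v₁ ∈ ℝ^{k×k} and the vector v₀ ∈ ℝ^k satisfy the algebraic Riccati equation v₁(A − qΥᵀΣ⁻¹Υ)v₁ + v₁(b + qΥᵀΣ⁻¹μ₁) + (b + qΥᵀΣ⁻¹μ₁)ᵀv₁ − qμ₁ᵀΣ⁻¹μ₁ = 0 and the linear equation (v₁(A − qΥᵀΣ⁻¹Υ) + (b + qΥᵀΣ⁻¹μ₁)ᵀ)v₀ − p r₁ + q(μ₁ᵀ − v₁Υᵀ)Σ⁻¹μ₀ = 0, and set λ = p r₀ − (q/2)μ₀ᵀΣ⁻¹μ₀ + (1/2)v₀ᵀ(A − qΥᵀΣ⁻¹Υ)v₀ − q v₀ᵀΥᵀΣ⁻¹μ₀ − (1/2)trace(A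 v₁). Then the function v(y) = v₀ᵀy − (1/2)yᵀv₁y, whose gradient is ∇v(y) = v₀ − v₁y and whose Hessian is the constant matrix −v₁, satisfies for every y ∈ ℝ^k: p(r₀ + r₁ᵀy) − (q/2)(μ₀ + μ₁y)ᵀΣ⁻¹(μ₀ + μ₁y) + (1/2)∇v(y)ᵀ(A − qΥᵀΣ⁻¹Υ)∇v(y) + ∇v(y)ᵀ(−b y − qΥᵀΣ⁻¹(μ₀ + μ₁y)) + (1/2)trace(A·(−v₁)) = λ. -/
open Matrix


private lemma flipDP {k m : ℕ} (M : Matrix (Fin m) (Fin k) ℝ) (x : Fin k → ℝ) (z : Fin m → ℝ) :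
    (M.mulVec x) ⬝ᵥ z = x ⬝ᵥ Mᵀ.mulVec z := by
  rw [dotProduct_comm, dotProduct_mulVec, ← mulVec_transpose, dotProduct_comm]

private lemma dpT {k m : ℕ} (M : Matrix (Fin k) (Fin m) ℝ) (x : Fin k → ℝ) (z : Fin m → ℝ) :
    x ⬝ᵥ M.mulVec z = z ⬝ᵥ Mᵀ.mulVec x := by
  rw [dotProduct_comm, flipDP]

/-- Theorem 4.1 verification step: in the linear diffusion model, a quadratic function
`v(y) = v₀ᵀy - (1/2)yᵀv₁y` (with gradient `v₀ - v₁y` and Hessian `-v₁`) solves the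
ergodic HJB equation with constant `λ` whenever `(v₀, v₁)` solve the stated matrix
Riccati and linear equations and `λ` is given by the stated formula. -/
theorem linear_diffusion_quadratic_solves_HJB {n k : ℕ} (hn : 1 ≤ n) (hk : 1 ≤ k)
    (p q : ℝ) (hp1 : p < 1) (hp0 : p ≠ 0) (hq : q = p / (p - 1))
    (r0 : ℝ) (r1 : Fin k → ℝ) (μ0 : Fin n → ℝ) (μ1 : Matrix (Fin n) (Fin k) ℝ)
    (b : Matrix (Fin k) (Fin k) ℝ) (U : Matrix (Fin n) (Fin k) ℝ)
    (S : Matrix (Fin n) (Fin n) ℝ) (hS : S.PosDef)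
    (A : Matrix (Fin k) (Fin k) ℝ) (hA : A.IsSymm)
    (v1 : Matrix (Fin k) (Fin k) ℝ) (hv1 : v1.IsSymm) (v0 : Fin k → ℝ)
    (hRiccati : v1 * (A - q • (Uᵀ * S⁻¹ * U)) * v1 + v1 * (b + q • (Uᵀ * S⁻¹ * μ1))
        + (b + q • (Uᵀ * S⁻¹ * μ1))ᵀ * v1 - q • (μ1ᵀ * S⁻¹ * μ1) = 0)
    (hLinear : (v1 * (A - q • (Uᵀ * S⁻¹ * U)) + (b + q • (Uᵀ * S⁻¹ * μ1))ᵀ).mulVec v0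
        - p • r1 + q • ((μ1ᵀ - v1 * Uᵀ) * S⁻¹).mulVec μ0 = 0)
    (lam : ℝ)
    (hlam : lam = p * r0 - q / 2 * (μ0 ⬝ᵥ S⁻¹.mulVec μ0)
        + (1 / 2) * (v0 ⬝ᵥ (A - q • (Uᵀ * S⁻¹ * U)).mulVec v0)
        - q * (v0 ⬝ᵥ (Uᵀ * S⁻¹).mulVec μ0)
        - (1 / 2) * (A * v1).trace) :
    ∀ y : Fin k → ℝ,
      p * (r0 + r1 ⬝ᵥ y)
        - q / 2 * ((μ0 + μ1.mulVec y) ⬝ᵥ S⁻¹.mulVec (μ0 + μ1.mulVec y))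
        + (1 / 2) * ((v0 - v1.mulVec y) ⬝ᵥ
            (A - q • (Uᵀ * S⁻¹ * U)).mulVec (v0 - v1.mulVec y))
        + (v0 - v1.mulVec y) ⬝ᵥ
            (-(b.mulVec y) - q • (Uᵀ * S⁻¹).mulVec (μ0 + μ1.mulVec y))
        + (1 / 2) * (A * (-v1)).trace
      = lam := by
  intro y
  subst hlam
  have hSsym : Sᵀ = S := hS.isHermitian
  have hG : (S⁻¹)ᵀ = S⁻¹ := by rw [Matrix.transpose_nonsing_inv, hSsym]
  have h1 := congrArg (fun M : Matrix (Fin k) (Fin k) ℝ => y ⬝ᵥ M.mulVec y) hRiccati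
  have h2 := congrArg (fun v : Fin k → ℝ => v ⬝ᵥ y) hLinear
  simp only [Matrix.zero_mulVec, dotProduct_zero, zero_dotProduct] at h1 h2
  simp only [Matrix.add_mulVec, Matrix.sub_mulVec, Matrix.neg_mulVec, Matrix.smul_mulVec,
    Matrix.mulVec_smul, ← Matrix.mulVec_mulVec, Matrix.transpose_mul, Matrix.transpose_smul,
    Matrix.transpose_add, Matrix.transpose_sub, Matrix.transpose_transpose, hv1.eq, hA.eq, hG,
    Matrix.mulVec_add, Matrix.mulVec_sub, Matrix.mulVec_neg,
    dotProduct_add, add_dotProduct, dotProduct_sub, sub_dotProduct,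
    dotProduct_neg, neg_dotProduct, dotProduct_smul, smul_dotProduct, smul_eq_mul,
    flipDP, Matrix.trace_neg, Matrix.mul_neg] at h1 h2 ⊢
  have e1 : y ⬝ᵥ μ1ᵀ.mulVec (S⁻¹.mulVec μ0) = μ0 ⬝ᵥ S⁻¹.mulVec (μ1.mulVec y) := by
    simp only [Matrix.mulVec_mulVec]; rw [dpT]
    simp only [Matrix.transpose_mul, Matrix.transpose_transpose, hG, ← Matrix.mulVec_mulVec]
  have e2 : y ⬝ᵥ v1.mulVec (A.mulVec v0) = v0 ⬝ᵥ A.mulVec (v1.mulVec y) := by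
    simp only [Matrix.mulVec_mulVec]; rw [dpT]
    simp only [Matrix.transpose_mul, Matrix.transpose_transpose, hv1.eq, hA.eq,
      ← Matrix.mulVec_mulVec]
  have e3 : y ⬝ᵥ v1.mulVec (Uᵀ.mulVec (S⁻¹.mulVec (U.mulVec v0)))
      = v0 ⬝ᵥ Uᵀ.mulVec (S⁻¹.mulVec (U.mulVec (v1.mulVec y))) := by
    simp only [Matrix.mulVec_mulVec]; rw [dpT]
    simp only [Matrix.transpose_mul, Matrix.transpose_transpose, hv1.eq, hG,
      ← Matrix.mulVec_mulVec]
  have e4 : y ⬝ᵥ v1.mulVec (Uᵀ.mulVec (S⁻¹.mulVec μ0))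
      = μ0 ⬝ᵥ S⁻¹.mulVec (U.mulVec (v1.mulVec y)) := by
    simp only [Matrix.mulVec_mulVec]; rw [dpT]
    simp only [Matrix.transpose_mul, Matrix.transpose_transpose, hv1.eq, hG,
      ← Matrix.mulVec_mulVec]
  have e5 : y ⬝ᵥ bᵀ.mulVec (v1.mulVec y) = y ⬝ᵥ v1.mulVec (b.mulVec y) := by
    simp only [Matrix.mulVec_mulVec]; rw [dpT]
    simp only [Matrix.transpose_mul, Matrix.transpose_transpose, hv1.eq,
      ← Matrix.mulVec_mulVec]
  have e6 : y ⬝ᵥ μ1ᵀ.mulVec (S⁻¹.mulVec (U.mulVec (v1.mulVec y)))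
      = y ⬝ᵥ v1.mulVec (Uᵀ.mulVec (S⁻¹.mulVec (μ1.mulVec y))) := by
    simp only [Matrix.mulVec_mulVec]; rw [dpT]
    simp only [Matrix.transpose_mul, Matrix.transpose_transpose, hv1.eq, hG,
      ← Matrix.mulVec_mulVec]
  rw [e5, e6] at h1
  rw [e1, e2, e3, e4]
  linear_combination (1/2 : ℝ) * h1 - h2
end

section
/- Let E = (α, β) ⊆ ℝ be an open interval and let A, b, μ, Σ, Υ, r : E → ℝ be functions with A(y) > 0 and Σ(y) > 0 for all y ∈ E. Let p, q ∈ ℝ and suppose there is a constant ρ̄ with q ρ̄ ≠ 1 such that Υ(y)²/(Σ(y)A(y)) = ρ̄ for all y ∈ E; set δ = 1/(1 − qρ̄) and V(y) = p r(y) − (q/2)μ(y)²/Σ(y). Let v : E → ℝ be twice differentiable, λ ∈ ℝ, and φ = exp(v/δ). Then v satisfies the quasilinear ODE V + (1/2)(v′)²(A − qΥ²/Σ) + v′(b − qΥμ/Σ) + (1/2)A v″ = λ on E if and only if φ satisfies the linear ODE (A/2)φ″ + (b − qΥμ/Σ)φ′ + δ^{-1}(V − λ)φ = 0 on E. -/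
/-- Power-transform linearization (equation (2.14)): for one state variable with constant
squared correlation `ρ̄ = Υ²/(ΣA)`, `v` solves the quasilinear ergodic HJB ODE on
`E = (α, β)` if and only if `φ = exp(v/δ)` solves the linear second-order ODE, where
`δ = 1/(1 - qρ̄)`.  (`Sig` plays the role of `Σ`.) -/
theorem power_transform_linearization (α β : ℝ) (A b μ Sig Υ r : ℝ → ℝ)
    (hA : ∀ y ∈ Set.Ioo α β, 0 < A y) (hSig : ∀ y ∈ Set.Ioo α β, 0 < Sig y)
    (p q ρbar : ℝ) (hρbar : q * ρbar ≠ 1)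
    (hconst : ∀ y ∈ Set.Ioo α β, (Υ y) ^ 2 / (Sig y * A y) = ρbar)
    (δ : ℝ) (hδ : δ = 1 / (1 - q * ρbar))
    (v : ℝ → ℝ)
    (hv1 : ∀ y ∈ Set.Ioo α β, DifferentiableAt ℝ v y)
    (hv2 : ∀ y ∈ Set.Ioo α β, DifferentiableAt ℝ (deriv v) y)
    (lam : ℝ) (φ : ℝ → ℝ) (hφ : φ = fun y => Real.exp (v y / δ)) :
    (∀ y ∈ Set.Ioo α β,
        (p * r y - q / 2 * (μ y) ^ 2 / Sig y)
          + (1 / 2) * (deriv v y) ^ 2 * (A y - q * (Υ y) ^ 2 / Sig y)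
          + deriv v y * (b y - q * Υ y * μ y / Sig y)
          + (1 / 2) * A y * deriv (deriv v) y = lam)
    ↔ (∀ y ∈ Set.Ioo α β,
        (A y / 2) * deriv (deriv φ) y
          + (b y - q * Υ y * μ y / Sig y) * deriv φ y
          + δ⁻¹ * ((p * r y - q / 2 * (μ y) ^ 2 / Sig y) - lam) * φ y = 0) := by
  have hδ0 : (1 : ℝ) - q * ρbar ≠ 0 := sub_ne_zero.mpr (Ne.symm hρbar)
  have hδne : δ ≠ 0 := by rw [hδ]; exact one_div_ne_zero hδ0
  subst hφ
  refine forall₂_congr fun y hy => ?_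
  have hAy := hA y hy
  have hSy := hSig y hy
  -- first derivative of φ at any point of the interval
  have hder : ∀ z ∈ Set.Ioo α β,
      HasDerivAt (fun w => Real.exp (v w / δ))
        (Real.exp (v z / δ) * (deriv v z / δ)) z := fun z hz =>
    (((hv1 z hz).hasDerivAt.div_const δ)).exp
  have hd1 : deriv (fun w => Real.exp (v w / δ)) y
      = Real.exp (v y / δ) * (deriv v y / δ) := (hder y hy).deriv
  -- second derivative
  have heq : deriv (fun w => Real.exp (v w / δ))
      =ᶠ[nhds y] fun z => Real.exp (v z / δ) * (deriv v z / δ) := by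
    filter_upwards [isOpen_Ioo.mem_nhds hy] with z hz
    exact (hder z hz).deriv
  have hg : HasDerivAt (fun z => Real.exp (v z / δ) * (deriv v z / δ))
      (Real.exp (v y / δ) * (deriv v y / δ) * (deriv v y / δ)
        + Real.exp (v y / δ) * (deriv (deriv v) y / δ)) y :=
    (hder y hy).mul ((hv2 y hy).hasDerivAt.div_const δ)
  have hd2 : deriv (deriv (fun w => Real.exp (v w / δ))) y
      = Real.exp (v y / δ) * (deriv v y / δ) * (deriv v y / δ)
        + Real.exp (v y / δ) * (deriv (deriv v) y / δ) := by
    rw [heq.deriv_eq]; exact hg.deriv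
  rw [hd1, hd2]
  set E := Real.exp (v y / δ) with hE
  have hEpos : 0 < E := Real.exp_pos _
  -- algebraic identity for Υ²
  have hU : (Υ y) ^ 2 = ρbar * (Sig y * A y) := by
    have := hconst y hy
    field_simp at this
    linarith [this]
  have key : (A y / 2) * (E * (deriv v y / δ) * (deriv v y / δ)
        + E * (deriv (deriv v) y / δ))
      + (b y - q * Υ y * μ y / Sig y) * (E * (deriv v y / δ))
      + δ⁻¹ * ((p * r y - q / 2 * (μ y) ^ 2 / Sig y) - lam) * E
    = E * δ⁻¹ * (((p * r y - q / 2 * (μ y) ^ 2 / Sig y)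
          + (1 / 2) * (deriv v y) ^ 2 * (A y - q * (Υ y) ^ 2 / Sig y)
          + deriv v y * (b y - q * Υ y * μ y / Sig y)
          + (1 / 2) * A y * deriv (deriv v) y) - lam) := by
    have h1 : A y - q * (Υ y) ^ 2 / Sig y = A y / δ := by
      rw [hU, hδ]
      field_simp
    rw [h1]
    field_simp
    ring
  rw [key]
  constructor
  · intro h; rw [h]; ring
  · intro h
    have := mul_eq_zero.mp h
    rcases this with h' | h'
    · exact absurd h' (mul_ne_zero hEpos.ne' (inv_ne_zero hδne))
    · linarith [h']
end

section
/- Let n ≥ 1, p < 0, q = p/(p−1), a > 0, b, θ, r₀, r₁ ∈ ℝ, and ν₀, ν₁, ρ ∈ ℝ^n with q·(ρᵀρ) < 1. Set δ = 1/(1 − qρᵀρ), c = bθ − a²/2, Θ = (b + qaρᵀν₁)² + (a²/δ)(qν₁ᵀν₁ − 2p r₁) and Λ = (c − qaρᵀν₀)² + (a²/δ) q ν₀ᵀν₀, and assume Θ ≥ 0 and Λ ≥ 0. Define v₁ = (δ/a²)(b + qaρᵀν₁ − √Θ), v₀ = (δ/a²)(−(c − qaρᵀν₀) + √Λ), and λ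 = p r₀ − q ν₀ᵀν₁ + (a²/δ)v₀v₁ − v₀(b + qaρᵀν₁) + v₁(bθ − qaρᵀν₀). Then for every y > 0 the function v(y) = v₀ log y + v₁ y satisfies p(r₀ + r₁ y) − (q/(2y))(ν₀ + ν₁ y)ᵀ(ν₀ + ν₁ y) + (1/2)(v₀/y + v₁)²·(a² y/δ) + (v₀/y + v₁)·(b(θ − y) − qa(ρᵀν₀ + ρᵀν₁ y)) − (1/2)a² v₀/y = λ. -/
open Matrix

/-! The left-hand side of the HJB equation is a Laurent polynomial `A / y + B + C y` in the
state `y`. Up to a factor `1 / 2`, `A` and `C` are the quadratics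
`(a² / δ) x² + 2 (c - q a ρᵀν₀) x - q ν₀ᵀν₀` at `x = v₀` (the term `-a² v₀ / (2y)` is what
turns `bθ` into `c`) and `(a² / δ) x² - 2 (b + q a ρᵀν₁) x - (q ν₁ᵀν₁ - 2 p r₁)` at `x = v₁`.
Their discriminants are `Λ` and `Θ`, so the explicit `v₀` and `v₁` are roots, and the
constant term `B` is `λ`. -/

theorem mul_sq_add_two_mul_eq_of_mul_eq_sub {K : Type*} [Field K] {α β γ s x : K}
    (hα : α ≠ 0) (hs : s ^ 2 = β ^ 2 + α * γ) (hx : α * x = s - β) :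
    α * x ^ 2 + 2 * β * x = γ :=
  mul_left_cancel₀ hα <| by linear_combination (α * x + s + β) * hx + hs

theorem dotProduct_add_smul_self {n R : Type*} [Fintype n] [CommRing R] (u w : n → R) (y : R) :
    (u + y • w) ⬝ᵥ (u + y • w) = u ⬝ᵥ u + 2 * y * (u ⬝ᵥ w) + y ^ 2 * (w ⬝ᵥ w) := by
  simp only [add_dotProduct, dotProduct_add, smul_dotProduct, dotProduct_smul, smul_eq_mul,
    dotProduct_comm w u]
  ring

theorem cir_explicit_solution_solves_HJB_general {n : ℕ}
    (p q : ℝ)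
    (a : ℝ) (ha : 0 < a) (b θ r0 r1 : ℝ) (ν0 ν1 ρ : Fin n → ℝ)
    (hqρ : q * (ρ ⬝ᵥ ρ) < 1)
    (δ c Θ Λ v1 v0 lam : ℝ)
    (hδ : δ = 1 / (1 - q * (ρ ⬝ᵥ ρ)))
    (hc : c = b * θ - a ^ 2 / 2)
    (hΘ : Θ = (b + q * a * (ρ ⬝ᵥ ν1)) ^ 2 + (a ^ 2 / δ) * (q * (ν1 ⬝ᵥ ν1) - 2 * p * r1))
    (hΛ : Λ = (c - q * a * (ρ ⬝ᵥ ν0)) ^ 2 + (a ^ 2 / δ) * (q * (ν0 ⬝ᵥ ν0)))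
    (hΘ0 : 0 ≤ Θ) (hΛ0 : 0 ≤ Λ)
    (hv1 : v1 = (δ / a ^ 2) * (b + q * a * (ρ ⬝ᵥ ν1) - Real.sqrt Θ))
    (hv0 : v0 = (δ / a ^ 2) * (-(c - q * a * (ρ ⬝ᵥ ν0)) + Real.sqrt Λ))
    (hlam : lam = p * r0 - q * (ν0 ⬝ᵥ ν1) + (a ^ 2 / δ) * v0 * v1
        - v0 * (b + q * a * (ρ ⬝ᵥ ν1)) + v1 * (b * θ - q * a * (ρ ⬝ᵥ ν0))) :
    ∀ y : ℝ, 0 < y →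
      p * (r0 + r1 * y)
        - (q / (2 * y)) * ((ν0 + y • ν1) ⬝ᵥ (ν0 + y • ν1))
        + (1 / 2) * (v0 / y + v1) ^ 2 * (a ^ 2 * y / δ)
        + (v0 / y + v1) * (b * (θ - y) - q * a * ((ρ ⬝ᵥ ν0) + (ρ ⬝ᵥ ν1) * y))
        - (1 / 2) * a ^ 2 * v0 / y
      = lam := by
  intro y hy
  have hδ0 : δ ≠ 0 := hδ ▸ one_div_ne_zero (sub_ne_zero.mpr hqρ.ne')
  have hα : a ^ 2 / δ ≠ 0 := div_ne_zero (pow_ne_zero 2 ha.ne') hδ0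
  have hv0_root : a ^ 2 / δ * v0 ^ 2 + 2 * (c - q * a * (ρ ⬝ᵥ ν0)) * v0 = q * (ν0 ⬝ᵥ ν0) :=
    mul_sq_add_two_mul_eq_of_mul_eq_sub (s := √Λ) hα (by rw [Real.sq_sqrt hΛ0, hΛ]) <| by
      rw [hv0]; field_simp; ring
  have hv1_root : a ^ 2 / δ * v1 ^ 2 + 2 * -(b + q * a * (ρ ⬝ᵥ ν1)) * v1
      = q * (ν1 ⬝ᵥ ν1) - 2 * p * r1 :=
    mul_sq_add_two_mul_eq_of_mul_eq_sub (s := -√Θ) hα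
      (by rw [neg_sq, neg_sq, Real.sq_sqrt hΘ0, hΘ]) <| by
      rw [hv1]; field_simp; ring
  rw [dotProduct_add_smul_self, hlam]
  subst hc
  field_simp at hv0_root hv1_root ⊢
  linear_combination hv0_root + y ^ 2 * hv1_root

/-- Explicit candidate solution (4.13) in the Cox–Ingersoll–Ross model: with `v₀, v₁, λ`
given by the stated formulas, the function `v(y) = v₀ log y + v₁ y` satisfies the ergodic
HJB equation for every `y > 0` (all derivative expressions already substituted). -/
theorem cir_explicit_solution_solves_HJB {n : ℕ} (hn : 1 ≤ n)
    (p q : ℝ) (hp : p < 0) (hq : q = p / (p - 1))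
    (a : ℝ) (ha : 0 < a) (b θ r0 r1 : ℝ) (ν0 ν1 ρ : Fin n → ℝ)
    (hqρ : q * (ρ ⬝ᵥ ρ) < 1)
    (δ c Θ Λ v1 v0 lam : ℝ)
    (hδ : δ = 1 / (1 - q * (ρ ⬝ᵥ ρ)))
    (hc : c = b * θ - a ^ 2 / 2)
    (hΘ : Θ = (b + q * a * (ρ ⬝ᵥ ν1)) ^ 2 + (a ^ 2 / δ) * (q * (ν1 ⬝ᵥ ν1) - 2 * p * r1))
    (hΛ : Λ = (c - q * a * (ρ ⬝ᵥ ν0)) ^ 2 + (a ^ 2 / δ) * (q * (ν0 ⬝ᵥ ν0)))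
    (hΘ0 : 0 ≤ Θ) (hΛ0 : 0 ≤ Λ)
    (hv1 : v1 = (δ / a ^ 2) * (b + q * a * (ρ ⬝ᵥ ν1) - Real.sqrt Θ))
    (hv0 : v0 = (δ / a ^ 2) * (-(c - q * a * (ρ ⬝ᵥ ν0)) + Real.sqrt Λ))
    (hlam : lam = p * r0 - q * (ν0 ⬝ᵥ ν1) + (a ^ 2 / δ) * v0 * v1
        - v0 * (b + q * a * (ρ ⬝ᵥ ν1)) + v1 * (b * θ - q * a * (ρ ⬝ᵥ ν0))) :
    ∀ y : ℝ, 0 < y →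
      p * (r0 + r1 * y)
        - (q / (2 * y)) * ((ν0 + y • ν1) ⬝ᵥ (ν0 + y • ν1))
        + (1 / 2) * (v0 / y + v1) ^ 2 * (a ^ 2 * y / δ)
        + (v0 / y + v1) * (b * (θ - y) - q * a * ((ρ ⬝ᵥ ν0) + (ρ ⬝ᵥ ν1) * y))
        - (1 / 2) * a ^ 2 * v0 / y
      = lam :=
  cir_explicit_solution_solves_HJB_general p q a ha b θ r0 r1 ν0 ν1 ρ hqρ δ c Θ Λ v1 v0 lam hδ hc hΘ
    hΛ hΘ0 hΛ0 hv1 hv0 hlam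
end

section
/- Let E ⊆ ℝ^k be open, q, λ ∈ ℝ, let A : E → ℝ^{k×k} take symmetric values, Σ : E → ℝ^{n×n} take invertible values, Υ : E → ℝ^{n×k}, b : E → ℝ^k, μ : E → ℝ^n, V : E → ℝ, and let v : E → ℝ be twice differentiable. Suppose v satisfies, for all y ∈ E, V + (1/2)∇vᵀ(A − qΥᵀΣ⁻¹Υ)∇v + ∇vᵀ(b − qΥᵀΣ⁻¹μ) + (1/2)trace(A·D²v) = λ. Define the operator L by (Lf)(y) = ∇f(y)ᵀ( b(y) − q(ΥᵀΣ⁻¹μ)(y) + (A(y) − q(ΥᵀΣ⁻¹Υ)(y))∇v(y) ) + (1/2)trace(A(y)·D²f(y)) for f twice differentiable. Then for every α ∈ ℝ and every y ∈ E, L(e^{αv})(y) = α e^{αv(y)} ( (1/2)∇v(y)ᵀ( (1+α)A(y) − q(ΥᵀΣ⁻¹Υ)(y) )∇v(y) + λ − V(y) ). -/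
open Matrix

/-!
By the chain rule, `L(f ∘ v) = f'(v) Lv + ½ f''(v) ∇vᵀA∇v` for any twice differentiable `f`.
Since the drift of `L` contains `(A − qΥᵀΣ⁻¹Υ)∇v`, the HJB equation reads
`Lv = λ − V + ½ ∇vᵀ(A − qΥᵀΣ⁻¹Υ)∇v`; taking `f = exp (α ·)`, so that `f' = α f` and
`f'' = α² f`, gives the identity.
-/

/-- The gradient of `v : ℝ^k → ℝ`, encoded via partial derivatives. -/
noncomputable def grad {k : ℕ} (v : (Fin k → ℝ) → ℝ) (y : Fin k → ℝ) : Fin k → ℝ :=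
  fun i => fderiv ℝ v y (Pi.single i 1)

/-- The Hessian matrix of `v : ℝ^k → ℝ`, encoded via iterated partial derivatives. -/
noncomputable def hess {k : ℕ} (v : (Fin k → ℝ) → ℝ) (y : Fin k → ℝ) :
    Matrix (Fin k) (Fin k) ℝ :=
  Matrix.of fun i j => fderiv ℝ (fun z => fderiv ℝ v z (Pi.single j 1)) y (Pi.single i 1)

open Filter Topology

section ChainRule

variable {k : ℕ} {f f' : ℝ → ℝ} {v : (Fin k → ℝ) → ℝ} {y : Fin k → ℝ}

theorem fderiv_comp_eq_smul (hf : HasDerivAt f (f' (v y)) (v y)) (hv : DifferentiableAt ℝ v y) :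
    fderiv ℝ (fun z => f (v z)) y = f' (v y) • fderiv ℝ v y :=
  (hf.comp_hasFDerivAt y hv.hasFDerivAt).fderiv

theorem grad_comp (hf : HasDerivAt f (f' (v y)) (v y)) (hv : DifferentiableAt ℝ v y) :
    grad (fun z => f (v z)) y = f' (v y) • grad v y := by
  ext i
  simp [grad, fderiv_comp_eq_smul hf hv]

theorem hess_comp {f'' : ℝ} (hf : ∀ t, HasDerivAt f (f' t) t) (hf' : HasDerivAt f' f'' (v y))
    (hv : ∀ᶠ z in 𝓝 y, DifferentiableAt ℝ v z) (hv' : DifferentiableAt ℝ (fderiv ℝ v) y) :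
    hess (fun z => f (v z)) y = f' (v y) • hess v y + f'' • vecMulVec (grad v y) (grad v y) := by
  ext i j
  have hpartial : (fun z => fderiv ℝ (fun w => f (v w)) z (Pi.single j 1))
      =ᶠ[𝓝 y] fun z => f' (v z) * grad v z j := by
    filter_upwards [hv] with z hz
    simp [fderiv_comp_eq_smul (hf (v z)) hz, grad]
  have hgrad_j : HasFDerivAt (fun z => grad v z j) (fderiv ℝ (fun z => grad v z j) y) y :=
    (hv'.clm_apply (differentiableAt_const _)).hasFDerivAt
  have hprod : HasFDerivAt (fun z => f' (v z) * grad v z j)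
      (f' (v y) • fderiv ℝ (fun z => grad v z j) y + grad v y j • f'' • fderiv ℝ v y) y :=
    (hf'.comp_hasFDerivAt y hv.self_of_nhds.hasFDerivAt).mul hgrad_j
  simp only [hess, of_apply, hpartial.fderiv_eq, hprod.fderiv]
  simp only [grad, _root_.add_apply, _root_.smul_apply, smul_eq_mul,
    Matrix.add_apply, Matrix.smul_apply, of_apply, vecMulVec_apply]
  ring

/-- With `c = b − qΥᵀΣ⁻¹μ + (A − qΥᵀΣ⁻¹Υ)∇v` evaluated at `y`, this is the paper's `L`. -/
noncomputable def diffusionGenerator (c : Fin k → ℝ) (A : Matrix (Fin k) (Fin k) ℝ)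
    (f : (Fin k → ℝ) → ℝ) (y : Fin k → ℝ) : ℝ :=
  grad f y ⬝ᵥ c + (1 / 2) * (A * hess f y).trace

theorem diffusionGenerator_comp (c : Fin k → ℝ) (A : Matrix (Fin k) (Fin k) ℝ) {f'' : ℝ}
    (hf : ∀ t, HasDerivAt f (f' t) t) (hf' : HasDerivAt f' f'' (v y))
    (hv : ∀ᶠ z in 𝓝 y, DifferentiableAt ℝ v z) (hv' : DifferentiableAt ℝ (fderiv ℝ v) y) :
    diffusionGenerator c A (fun z => f (v z)) y
      = f' (v y) * diffusionGenerator c A v y + f'' / 2 * (grad v y ⬝ᵥ A *ᵥ grad v y) := by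
  simp only [diffusionGenerator, grad_comp (hf (v y)) hv.self_of_nhds, hess_comp hf hf' hv hv',
    smul_dotProduct, smul_eq_mul, mul_add, Matrix.mul_smul, trace_add, trace_smul, mul_vecMulVec,
    trace_vecMulVec, dotProduct_comm (A *ᵥ grad v y)]
  ring

end ChainRule

theorem myopic_generator_exponential_identity_general {k n : ℕ} (E : Set (Fin k → ℝ))
    (hE : IsOpen E) (q lam : ℝ)
    (A : (Fin k → ℝ) → Matrix (Fin k) (Fin k) ℝ)
    (S : (Fin k → ℝ) → Matrix (Fin n) (Fin n) ℝ)
    (U : (Fin k → ℝ) → Matrix (Fin n) (Fin k) ℝ)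
    (b : (Fin k → ℝ) → Fin k → ℝ) (μ : (Fin k → ℝ) → Fin n → ℝ)
    (V : (Fin k → ℝ) → ℝ) (v : (Fin k → ℝ) → ℝ)
    (hv1 : ∀ y ∈ E, DifferentiableAt ℝ v y)
    (hv2 : ∀ y ∈ E, DifferentiableAt ℝ (fderiv ℝ v) y)
    (hHJB : ∀ y ∈ E,
      V y + (1 / 2) * (grad v y ⬝ᵥ ((A y - q • ((U y)ᵀ * (S y)⁻¹ * U y)).mulVec (grad v y)))
        + grad v y ⬝ᵥ (b y - q • ((U y)ᵀ * (S y)⁻¹).mulVec (μ y))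
        + (1 / 2) * (A y * hess v y).trace = lam) :
    ∀ α : ℝ, ∀ y ∈ E,
      grad (fun z => Real.exp (α * v z)) y ⬝ᵥ
          (b y - q • ((U y)ᵀ * (S y)⁻¹).mulVec (μ y)
            + (A y - q • ((U y)ᵀ * (S y)⁻¹ * U y)).mulVec (grad v y))
        + (1 / 2) * (A y * hess (fun z => Real.exp (α * v z)) y).trace
      = α * Real.exp (α * v y) *
          ((1 / 2) * (grad v y ⬝ᵥ
              (((1 + α) • A y - q • ((U y)ᵀ * (S y)⁻¹ * U y)).mulVec (grad v y)))
            + lam - V y) := by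
  intro α y hy
  have hexp_deriv : ∀ t, HasDerivAt (fun t => Real.exp (α * t)) (α * Real.exp (α * t)) t :=
    fun t => by simpa [mul_comm] using ((hasDerivAt_id t).const_mul α).exp
  have hexp_second_deriv :
      HasDerivAt (fun t => α * Real.exp (α * t)) (α * (α * Real.exp (α * v y))) (v y) :=
    (hexp_deriv (v y)).const_mul α
  change diffusionGenerator _ (A y) (fun z => Real.exp (α * v z)) y = _
  rw [diffusionGenerator_comp _ _ hexp_deriv hexp_second_deriv
    (eventually_of_mem (hE.mem_nhds hy) hv1) (hv2 y hy), diffusionGenerator]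
  have hHJB' := hHJB y hy
  simp only [sub_mulVec, add_mulVec, smul_mulVec, dotProduct_add, dotProduct_sub,
    dotProduct_smul, add_smul, one_smul, smul_eq_mul] at hHJB' ⊢
  linear_combination (α * Real.exp (α * v y)) * hHJB'

/-- Key identity in the proof of Theorem 2.2: if `v` solves the ergodic HJB equation
(2.1) on the open set `E`, then the generator `L` of the state variable under the myopic
probability satisfies, for every `α ∈ ℝ` and `y ∈ E`,
`L(e^{αv})(y) = α e^{αv(y)} ((1/2)∇vᵀ((1+α)A − qΥᵀΣ⁻¹Υ)∇v + λ − V)`.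
(`S` plays the role of `Σ`, `U` the role of `Υ`.) -/
theorem myopic_generator_exponential_identity {k n : ℕ} (E : Set (Fin k → ℝ))
    (hE : IsOpen E) (q lam : ℝ)
    (A : (Fin k → ℝ) → Matrix (Fin k) (Fin k) ℝ) (hA : ∀ y ∈ E, (A y).IsSymm)
    (S : (Fin k → ℝ) → Matrix (Fin n) (Fin n) ℝ) (hS : ∀ y ∈ E, IsUnit (S y))
    (U : (Fin k → ℝ) → Matrix (Fin n) (Fin k) ℝ)
    (b : (Fin k → ℝ) → Fin k → ℝ) (μ : (Fin k → ℝ) → Fin n → ℝ)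
    (V : (Fin k → ℝ) → ℝ) (v : (Fin k → ℝ) → ℝ)
    (hv1 : ∀ y ∈ E, DifferentiableAt ℝ v y)
    (hv2 : ∀ y ∈ E, DifferentiableAt ℝ (fderiv ℝ v) y)
    (hHJB : ∀ y ∈ E,
      V y + (1 / 2) * (grad v y ⬝ᵥ ((A y - q • ((U y)ᵀ * (S y)⁻¹ * U y)).mulVec (grad v y)))
        + grad v y ⬝ᵥ (b y - q • ((U y)ᵀ * (S y)⁻¹).mulVec (μ y))
        + (1 / 2) * (A y * hess v y).trace = lam) :
    ∀ α : ℝ, ∀ y ∈ E,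
      grad (fun z => Real.exp (α * v z)) y ⬝ᵥ
          (b y - q • ((U y)ᵀ * (S y)⁻¹).mulVec (μ y)
            + (A y - q • ((U y)ᵀ * (S y)⁻¹ * U y)).mulVec (grad v y))
        + (1 / 2) * (A y * hess (fun z => Real.exp (α * v z)) y).trace
      = α * Real.exp (α * v y) *
          ((1 / 2) * (grad v y ⬝ᵥ
              (((1 + α) • A y - q • ((U y)ᵀ * (S y)⁻¹ * U y)).mulVec (grad v y)))
            + lam - V y) :=
  myopic_generator_exponential_identity_general E hE q lam A S U b μ V v hv1 hv2 hHJB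
end

section
/- For x ∈ (0, 1) and κ ∈ ℝ define f(x, κ) = (1 − 2x)·√(1 + x(κ² − 2κ)) + (1 − κx), where the argument of the square root satisfies 1 + x(κ² − 2κ) = (1 − x) + x(κ − 1)² > 0. Then: (a) if 0 < x ≤ 1/4, f(x, κ) > 0 for all κ ∈ ℝ; (b) if 1/4 < x < 1, then f(x, κ) > 0 if and only if κ < 2/(4x − 1). -/
set_option maxHeartbeats 1000000 in
/-- Computation underlying Corollary 4.3: for `x ∈ (0,1)` and `κ ∈ ℝ`, the argument of
the square root in `f(x,κ) = (1−2x)√(1+x(κ²−2κ)) + (1−κx)` is positive, `f > 0` whenever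
`x ≤ 1/4`, and for `1/4 < x < 1` one has `f > 0` if and only if `κ < 2/(4x−1)`. -/
theorem fads_long_run_optimality_condition (x κ : ℝ) (hx0 : 0 < x) (hx1 : x < 1) :
    (1 + x * (κ ^ 2 - 2 * κ) = (1 - x) + x * (κ - 1) ^ 2) ∧
    (0 < 1 + x * (κ ^ 2 - 2 * κ)) ∧
    (x ≤ 1 / 4 →
      0 < (1 - 2 * x) * Real.sqrt (1 + x * (κ ^ 2 - 2 * κ)) + (1 - κ * x)) ∧
    (1 / 4 < x →
      (0 < (1 - 2 * x) * Real.sqrt (1 + x * (κ ^ 2 - 2 * κ)) + (1 - κ * x)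
        ↔ κ < 2 / (4 * x - 1))) := by
  have hA : 0 < 1 + x * (κ ^ 2 - 2 * κ) := by nlinarith [sq_nonneg (κ - 1)]
  set s := Real.sqrt (1 + x * (κ ^ 2 - 2 * κ)) with hsdef
  have hs2 : s ^ 2 = 1 + x * (κ ^ 2 - 2 * κ) := Real.sq_sqrt hA.le
  have hs0 : 0 < s := Real.sqrt_pos.mpr hA
  -- key identity
  have hid : (1 - 2 * x) ^ 2 * (1 + x * (κ ^ 2 - 2 * κ)) - (1 - κ * x) ^ 2
      = x * (1 - x) * (2 - κ) * ((4 * x - 1) * κ - 2) := by ring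
  have m1 : 0 < x * (1 - x) := mul_pos hx0 (by linarith)
  refine ⟨by ring, hA, ?_, ?_⟩
  · -- x ≤ 1/4
    intro hx4
    have ha : 0 < 1 - 2 * x := by linarith
    by_cases hb : 0 < 1 - κ * x
    · have := mul_pos ha hs0
      linarith
    · push_neg at hb
      -- κ x ≥ 1, so κ > 2
      have hκ0 : 0 < κ := by
        by_contra hk; push_neg at hk
        nlinarith [mul_nonpos_of_nonpos_of_nonneg hk hx0.le]
      have hκ : 2 < κ := by
        nlinarith [mul_pos hκ0 (show (0:ℝ) < 1/2 - x by linarith)]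
      have mneg : (4 * x - 1) * κ ≤ 0 :=
        mul_nonpos_of_nonpos_of_nonneg (by linarith) hκ0.le
      have m3 : 0 < (2 - κ) * ((4 * x - 1) * κ - 2) :=
        mul_pos_of_neg_of_neg (by linarith) (by linarith)
      have key := mul_pos m1 m3
      have h2 : (1 - κ * x) ^ 2 < (1 - 2 * x) ^ 2 * s ^ 2 := by
        rw [hs2]; nlinarith [key, hid]
      have h3 : -(1 - κ * x) < (1 - 2 * x) * s := by
        nlinarith [h2, mul_pos ha hs0, hb]
      linarith
  · -- 1/4 < x
    intro hx4
    have h1 : 0 < 4 * x - 1 := by linarith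
    rw [lt_div_iff₀ h1]
    constructor
    · intro hf
      by_contra hc
      push_neg at hc  -- 2 ≤ κ * (4*x-1)
      have hκ0 : 0 < κ := by
        by_contra hk; push_neg at hk
        nlinarith [mul_nonpos_of_nonpos_of_nonneg hk h1.le]
      rcases le_or_gt x (1 / 2) with hx2 | hx2
      · -- a ≥ 0; show κ > 2, b < 0, and (as)² ≤ b²
        have hκ2 : 2 < κ := by
          nlinarith [mul_nonneg hκ0.le (show (0:ℝ) ≤ 2 - 4 * x by linarith)]
        have hb : 1 - κ * x < 0 := by linarith
        have m3 : (2 - κ) * ((4 * x - 1) * κ - 2) ≤ 0 :=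
          mul_nonpos_of_nonpos_of_nonneg (by linarith) (by linarith)
        have key := mul_nonpos_of_nonneg_of_nonpos m1.le m3
        have h2 : (1 - 2 * x) ^ 2 * s ^ 2 ≤ (1 - κ * x) ^ 2 := by
          rw [hs2]; nlinarith [key, hid]
        have ha : 0 ≤ 1 - 2 * x := by linarith
        have h3 : (1 - 2 * x) * s ≤ -(1 - κ * x) := by
          nlinarith [h2, mul_nonneg ha hs0.le, hb]
        linarith
      · -- a < 0
        rcases le_or_gt (1 - κ * x) 0 with hb | hb
        · have : (1 - 2 * x) * s ≤ 0 :=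
            mul_nonpos_of_nonpos_of_nonneg (by linarith) hs0.le
          linarith
        · have hκ2 : κ < 2 := by
            by_contra hk; push_neg at hk
            nlinarith [mul_le_mul_of_nonneg_right hk hx0.le]
          have m3 : (κ - 2) * ((4 * x - 1) * κ - 2) ≤ 0 :=
            mul_nonpos_of_nonpos_of_nonneg (by linarith) (by linarith)
          have key := mul_nonpos_of_nonneg_of_nonpos m1.le m3
          have h2 : (1 - κ * x) ^ 2 ≤ (1 - 2 * x) ^ 2 * s ^ 2 := by
            rw [hs2]; nlinarith [key, hid]
          have h3 : 1 - κ * x ≤ (2 * x - 1) * s := by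
            nlinarith [h2, hb, mul_pos (show (0:ℝ) < 2 * x - 1 by linarith) hs0]
          linarith
    · intro h  -- κ * (4x-1) < 2
      rcases le_or_gt x (1 / 2) with hx2 | hx2
      · rcases lt_or_ge 0 (1 - κ * x) with hb | hb
        · have : 0 ≤ (1 - 2 * x) * s :=
            mul_nonneg (by linarith) hs0.le
          linarith
        · -- b ≤ 0: κ x ≥ 1. Rule out x = 1/2, get κ > 2, strict square comparison
          have hκ0 : 0 < κ := by
            by_contra hk; push_neg at hk
            nlinarith [mul_nonpos_of_nonpos_of_nonneg hk hx0.le]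
          have hx2' : x < 1 / 2 := by
            rcases lt_or_eq_of_le hx2 with h' | h'
            · exact h'
            · exfalso; rw [h'] at hb h; linarith
          have hκ2 : 2 < κ := by
            nlinarith [mul_pos hκ0 (show (0:ℝ) < 1/2 - x by linarith)]
          have ha : 0 < 1 - 2 * x := by linarith
          have m3 : 0 < (2 - κ) * ((4 * x - 1) * κ - 2) :=
            mul_pos_of_neg_of_neg (by linarith) (by linarith)
          have key := mul_pos m1 m3
          have h2 : (1 - κ * x) ^ 2 < (1 - 2 * x) ^ 2 * s ^ 2 := by
            rw [hs2]; nlinarith [key, hid]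
          have h3 : -(1 - κ * x) < (1 - 2 * x) * s := by
            nlinarith [h2, mul_pos ha hs0, hb]
          linarith
      · -- x > 1/2: show κ < 2, b > 0 and b² > ((2x-1)s)²
        have hκ2 : κ < 2 := by
          by_contra hk; push_neg at hk
          nlinarith [mul_le_mul_of_nonneg_right hk (show (0:ℝ) ≤ 4 * x - 2 by linarith)]
        have hb : 0 < 1 - κ * x := by linarith
        have m3 : 0 < (κ - 2) * ((4 * x - 1) * κ - 2) :=
          mul_pos_of_neg_of_neg (by linarith) (by linarith)
        have key := mul_pos m1 m3
        have h2 : (1 - 2 * x) ^ 2 * s ^ 2 < (1 - κ * x) ^ 2 := by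
          rw [hs2]; nlinarith [key, hid]
        have h3 : (2 * x - 1) * s < 1 - κ * x := by
          nlinarith [h2, hb, mul_pos (show (0:ℝ) < 2 * x - 1 by linarith) hs0]
        linarith
end

section
/- Let δ > 4 and b > 0, and for t ≥ 0 define g(t) = 1 + (√δ/2)(1 − √δ)(1 − e^{−(2b/√δ)t}). Then √δ(√δ − 1) > 2, and for every t ≥ 0 one has g(t) > 0 if and only if t < t̂, where t̂ = −(√δ/(2b))·log( (√δ(√δ − 1) − 2) / (√δ(√δ − 1)) ) > 0. -/
/-- Finiteness threshold (C.5) in the proof of Proposition 4.4: for `δ > 4` and `b > 0`,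
one has `√δ(√δ−1) > 2`, the explicit time
`t̂ = −(√δ/(2b))·log((√δ(√δ−1)−2)/(√δ(√δ−1)))` is positive, and for `t ≥ 0` the quantity
`g(t) = 1 + (√δ/2)(1−√δ)(1−e^{−(2b/√δ)t})` is positive if and only if `t < t̂`. -/
theorem fads_finiteness_threshold (δ b : ℝ) (hδ : 4 < δ) (hb : 0 < b) :
    (2 < Real.sqrt δ * (Real.sqrt δ - 1)) ∧
    (0 < -(Real.sqrt δ / (2 * b)) *
        Real.log ((Real.sqrt δ * (Real.sqrt δ - 1) - 2) / (Real.sqrt δ * (Real.sqrt δ - 1)))) ∧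
    (∀ t : ℝ, 0 ≤ t →
      (0 < 1 + (Real.sqrt δ / 2) * (1 - Real.sqrt δ)
            * (1 - Real.exp (-(2 * b / Real.sqrt δ) * t))
        ↔ t < -(Real.sqrt δ / (2 * b)) *
            Real.log ((Real.sqrt δ * (Real.sqrt δ - 1) - 2)
              / (Real.sqrt δ * (Real.sqrt δ - 1))))) := by
  set s := Real.sqrt δ with hsdef
  have h4 : Real.sqrt 4 = 2 := by
    rw [show (4:ℝ) = 2 ^ 2 by norm_num, Real.sqrt_sq (by norm_num)]
  have hs : 2 < s := by
    rw [← h4]; exact Real.sqrt_lt_sqrt (by norm_num) hδ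
  have hs0 : 0 < s := by linarith
  have hP : 2 < s * (s - 1) := by nlinarith
  have hP0 : 0 < s * (s - 1) := by linarith
  set r := (s * (s - 1) - 2) / (s * (s - 1)) with hrdef
  have hr0 : 0 < r := div_pos (by linarith) hP0
  have hr1 : r < 1 := by rw [hrdef, div_lt_one hP0]; linarith
  have hlog : Real.log r < 0 := Real.log_neg hr0 hr1
  have hb2 : (0:ℝ) < 2 * b := by linarith
  refine ⟨hP, ?_, ?_⟩
  · have := mul_pos (div_pos hs0 hb2) (neg_pos.mpr hlog)
    nlinarith [this]
  · intro t ht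
    set E := Real.exp (-(2 * b / s) * t) with hEdef
    have h1 : (0 < 1 + (s / 2) * (1 - s) * (1 - E)) ↔ r < E := by
      rw [hrdef, div_lt_iff₀ hP0]
      constructor <;> intro h <;> nlinarith
    have h2 : r < E ↔ Real.log r < -(2 * b / s) * t := by
      rw [hEdef]; exact (Real.log_lt_iff_lt_exp hr0).symm
    have h3 : Real.log r < -(2 * b / s) * t ↔ t < -(s / (2 * b)) * Real.log r := by
      rw [show -(2 * b / s) * t = -(2 * b * t) / s by ring, lt_div_iff₀ hs0,
        show -(s / (2 * b)) * Real.log r = -(s * Real.log r) / (2 * b) by ring,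
        lt_div_iff₀ hb2]
      constructor <;> intro h <;> nlinarith
    rw [h1, h2, h3]
end
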